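/- Consider the quandle on {a,b,c,d} with matrix [a,a,a,b; b,b,b,c; c,c,c,a; d,d,d,d]. If ≤ is a compatible quasi-order and some two distinct elements of {a,b,c} are comparable, then a, b, c are mutually ≤-equivalent; and if a, b, c are pairwise incomparable, then ≤ is the discrete order. -/
import Mathlib


def CompatibleQuasiOrder {Q : Type*} (op : Q → Q → Q) (le : Q → Q → Prop) : Prop :=
  ∀ x x' y y' : Q, le x x' → le y y' → le (op x y) (op x' y')

def q4e : Fin 4 → Fin 4 → Fin 4 :=
  ![![0,0,0,1], ![1,1,1,2], ![2,2,2,0], ![3,3,3,3]]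

theorem stmt_18 (le : Fin 4 → Fin 4 → Prop)
    (hrefl : Reflexive le) (htrans : Transitive le)
    (hcomp : CompatibleQuasiOrder q4e le) :
    ((∃ x y : Fin 4, x ≠ y ∧ x ∈ ({0,1,2} : Set (Fin 4)) ∧
        y ∈ ({0,1,2} : Set (Fin 4)) ∧ (le x y ∨ le y x)) →
      ∀ x ∈ ({0,1,2} : Set (Fin 4)), ∀ y ∈ ({0,1,2} : Set (Fin 4)), le x y) ∧
    ((∀ x ∈ ({0,1,2} : Set (Fin 4)), ∀ y ∈ ({0,1,2} : Set (Fin 4)), x ≠ y → ¬ le x y) →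
      ∀ x y : Fin 4, le x y ↔ x = y) := by
  have step : ∀ u v : Fin 4, le u v → le (q4e u 3) (q4e v 3) :=
    fun u v h => hcomp u v 3 3 h (hrefl 3)
  have keyL : ∀ u v : Fin 4, le u v → le (q4e 0 u) (q4e 0 v) :=
    fun u v h => hcomp 0 0 u v (hrefl 0) h
  constructor
  · rintro ⟨x, y, hxy, hx, hy, h⟩
    have six : le 0 1 ∨ le 1 0 ∨ le 0 2 ∨ le 2 0 ∨ le 1 2 ∨ le 2 1 := by
      simp only [Set.mem_insert_iff, Set.mem_singleton_iff] at hx hy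
      rcases hx with rfl|rfl|rfl <;> rcases hy with rfl|rfl|rfl <;>
        first | exact absurd rfl hxy | tauto
    have all : le 0 1 ∧ le 1 2 ∧ le 2 0 ∧ le 1 0 ∧ le 2 1 ∧ le 0 2 := by
      rcases six with h|h|h|h|h|h
      · have h12 : le 1 2 := step 0 1 h
        have h20 : le 2 0 := step 1 2 h12
        exact ⟨h, h12, h20, htrans h12 h20, htrans h20 h, htrans h h12⟩
      · have h21 : le 2 1 := step 1 0 h
        have h02 : le 0 2 := step 2 1 h21
        exact ⟨htrans h02 h21, htrans h h02, htrans h21 h, h, h21, h02⟩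
      · have h10 : le 1 0 := step 0 2 h
        have h21 : le 2 1 := step 1 0 h10
        exact ⟨htrans h h21, htrans h10 h, htrans h21 h10, h10, h21, h⟩
      · have h01 : le 0 1 := step 2 0 h
        have h12 : le 1 2 := step 0 1 h01
        exact ⟨h01, h12, h, htrans h12 h, htrans h h01, htrans h01 h12⟩
      · have h20 : le 2 0 := step 1 2 h
        have h01 : le 0 1 := step 2 0 h20
        exact ⟨h01, h, h20, htrans h h20, htrans h20 h01, htrans h01 h⟩
      · have h02 : le 0 2 := step 2 1 h
        have h10 : le 1 0 := step 0 2 h02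
        exact ⟨htrans h02 h, htrans h10 h02, htrans h h10, h10, h, h02⟩
    obtain ⟨h01, h12, h20, h10, h21, h02⟩ := all
    intro x hx y hy
    simp only [Set.mem_insert_iff, Set.mem_singleton_iff] at hx hy
    rcases hx with rfl|rfl|rfl <;> rcases hy with rfl|rfl|rfl <;>
      first | exact hrefl _ | assumption
  · intro hinc x y
    have m0 : (0 : Fin 4) ∈ ({0,1,2} : Set (Fin 4)) := by simp
    have m1 : (1 : Fin 4) ∈ ({0,1,2} : Set (Fin 4)) := by simp
    have m2 : (2 : Fin 4) ∈ ({0,1,2} : Set (Fin 4)) := by simp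
    constructor
    · intro h
      fin_cases x <;> fin_cases y <;> try rfl
      · exact absurd h (hinc 0 m0 1 m1 (by decide))
      · exact absurd h (hinc 0 m0 2 m2 (by decide))
      · exact absurd (keyL 0 3 h) (hinc 0 m0 1 m1 (by decide))
      · exact absurd h (hinc 1 m1 0 m0 (by decide))
      · exact absurd h (hinc 1 m1 2 m2 (by decide))
      · exact absurd (keyL 1 3 h) (hinc 0 m0 1 m1 (by decide))
      · exact absurd h (hinc 2 m2 0 m0 (by decide))
      · exact absurd h (hinc 2 m2 1 m1 (by decide))
      · exact absurd (keyL 2 3 h) (hinc 0 m0 1 m1 (by decide))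
      · exact absurd (keyL 3 0 h) (hinc 1 m1 0 m0 (by decide))
      · exact absurd (keyL 3 1 h) (hinc 1 m1 0 m0 (by decide))
      · exact absurd (keyL 3 2 h) (hinc 1 m1 0 m0 (by decide))
    · rintro rfl; exact hrefl x
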